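/- arXiv:2308.07469 — 3 statements merged into one kernel-verified Lean document; each statement's English description precedes it below -/
import Mathlib

section
/- Consider the deterministic MDP with a single state, two actions a and b, where action a yields reward 1 and action b yields reward 0, with a Büchi objective requiring action b to be taken infinitely often. For discount factor λ ∈ (0,1): (i) the supremum of discounted reward over strategies satisfying the Büchi objective (i.e., strategies taking b infinitely often) equals 1/(1-λ); (ii) no strategy satisfying the Büchi objective attains discounted reward 1/(1-λ). -/
/-- A strategy in the single-state MDP is an infinite word `w : ℕ → Bool`,
where `true` means action `a` (reward 1) and `false` means action `b` (reward 0). -/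
noncomputable def discReward (lam : ℝ) (w : ℕ → Bool) : ℝ :=
  ∑' i : ℕ, lam ^ i * (if w i then 1 else 0)

/-- The Büchi objective: action `b` is taken infinitely often. -/
def Buchi (w : ℕ → Bool) : Prop := ∀ n : ℕ, ∃ m ≥ n, w m = false

/-- (i) the supremum of the discounted reward over strategies
satisfying the Büchi objective is 1/(1-λ); (ii) no strategy satisfying the
Büchi objective attains this value. -/
theorem buchi_discounted_sup_not_attained
    (lam : ℝ) (hlam0 : 0 < lam) (hlam1 : lam < 1) :
    IsLUB {x : ℝ | ∃ w : ℕ → Bool, Buchi w ∧ discReward lam w = x} (1 / (1 - lam)) ∧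
    ∀ w : ℕ → Bool, Buchi w → discReward lam w ≠ 1 / (1 - lam) := by
  have hlam0' : (0:ℝ) ≤ lam := hlam0.le
  have h1lam : (0:ℝ) < 1 - lam := by linarith
  have hgs : Summable (fun i : ℕ => lam ^ i) :=
    summable_geometric_of_lt_one hlam0' hlam1
  have hle : ∀ (w : ℕ → Bool) (i : ℕ),
      lam ^ i * (if w i then 1 else 0) ≤ lam ^ i := by
    intro w i
    have : (if w i then (1:ℝ) else 0) ≤ 1 := by split <;> norm_num
    calc lam ^ i * (if w i then (1:ℝ) else 0) ≤ lam ^ i * 1 :=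
          mul_le_mul_of_nonneg_left this (pow_nonneg hlam0' i)
      _ = lam ^ i := mul_one _
  have hnn : ∀ (w : ℕ → Bool) (i : ℕ),
      0 ≤ lam ^ i * (if w i then 1 else 0) := by
    intro w i
    apply mul_nonneg (pow_nonneg hlam0' i)
    split <;> norm_num
  have hsum : ∀ w : ℕ → Bool,
      Summable (fun i => lam ^ i * (if w i then 1 else 0)) := fun w =>
    Summable.of_nonneg_of_le (hnn w) (hle w) hgs
  have htot : ∑' i : ℕ, lam ^ i = 1 / (1 - lam) := by
    rw [tsum_geometric_of_lt_one hlam0' hlam1, one_div]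
  -- strict bound for Büchi strategies
  have hstrict : ∀ w : ℕ → Bool, Buchi w → discReward lam w < 1 / (1 - lam) := by
    intro w hw
    obtain ⟨m, -, hm⟩ := hw 0
    have hgsub : Summable (fun i : ℕ => lam ^ i - lam ^ i * (if w i then 1 else 0)) :=
      hgs.sub (hsum w)
    have hpos : lam ^ m ≤ ∑' i : ℕ, (lam ^ i - lam ^ i * (if w i then 1 else 0)) := by
      have := Summable.le_tsum hgsub m (fun i _ => by linarith [hle w i])
      simpa [hm] using this
    have heq : ∑' i : ℕ, (lam ^ i - lam ^ i * (if w i then 1 else 0))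
        = (1 / (1 - lam)) - discReward lam w := by
      rw [Summable.tsum_sub hgs (hsum w), htot]; rfl
    rw [heq] at hpos
    have : (0:ℝ) < lam ^ m := pow_pos hlam0 m
    linarith
  constructor
  · constructor
    · rintro x ⟨w, hw, rfl⟩
      exact (hstrict w hw).le
    · intro b hb
      -- strategies w_n : a for i < n, then b
      have hmem : ∀ n : ℕ, (1 - lam ^ n) / (1 - lam) ∈
          {x : ℝ | ∃ w : ℕ → Bool, Buchi w ∧ discReward lam w = x} := by
        intro n
        refine ⟨fun i => decide (i < n), fun k => ⟨max k n, le_max_left _ _, ?_⟩, ?_⟩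
        · simp [Nat.not_lt.mpr (le_max_right k n)]
        · unfold discReward
          rw [tsum_eq_sum (s := Finset.range n) (by
            intro i hi
            simp only [Finset.mem_range] at hi
            simp [hi])]
          have : ∀ i ∈ Finset.range n,
              lam ^ i * (if decide (i < n) = true then (1:ℝ) else 0) = lam ^ i := by
            intro i hi
            simp only [Finset.mem_range] at hi
            simp [hi]
          rw [Finset.sum_congr rfl this, geom_sum_eq (ne_of_lt hlam1)]
          rw [div_eq_div_iff (by linarith) (by linarith)]
          ring
      -- take limit n → ∞
      have hb' : ∀ n : ℕ, (1 - lam ^ n) / (1 - lam) ≤ b := fun n => hb (hmem n)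
      have hlim : Filter.Tendsto (fun n : ℕ => (1 - lam ^ n) / (1 - lam))
          Filter.atTop (nhds (1 / (1 - lam))) := by
        have h0 : Filter.Tendsto (fun n : ℕ => lam ^ n) Filter.atTop (nhds 0) :=
          tendsto_pow_atTop_nhds_zero_of_lt_one hlam0' hlam1
        have := ((tendsto_const_nhds (x := (1:ℝ))).sub h0).div_const (1 - lam)
        simpa using this
      exact le_of_tendsto' hlim hb'
  · intro w hw
    exact ne_of_lt (hstrict w hw)
end

section
/- Let v* be the unique fixed point of the optimal Bellman operator for a finite discounted MDP, and let σ be a positional strategy that is greedy with respect to v* (i.e., σ(q) attains the maximum in the Bellman equation at every q). Then the value of σ equals v*; in particular, finite discounted MDPs admit positional optimal strategies. -/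
open Finset

/-- The optimal Bellman operator of a finite MDP. -/
noncomputable def bellman {Q Act : Type*} [Fintype Q] [DecidableEq Act]
    (A : Q → Finset Act) (hA : ∀ q, (A q).Nonempty)
    (P : Q → Act → Q → ℝ) (ρ : Q → Act → Q → ℝ) (lam : ℝ)
    (v : Q → ℝ) : Q → ℝ :=
  fun q => (A q).sup' (hA q) (fun a => ∑ q' : Q, P q a q' * (ρ q a q' + lam * v q'))

/-- let v* be a fixed point of the optimal Bellman operator of a
finite discounted MDP, let σ be a positional strategy greedy with respect to v*
(σ q attains the maximum in the Bellman equation at every q), and let v_σ be the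
value of σ, i.e. the solution of the linear Bellman equation for σ.  Then
v_σ = v*; in particular positional optimal strategies exist. -/
theorem greedy_positional_strategy_optimal
    {Q Act : Type*} [Fintype Q] [Nonempty Q] [DecidableEq Act]
    (A : Q → Finset Act) (hA : ∀ q, (A q).Nonempty)
    (P : Q → Act → Q → ℝ)
    (hPnonneg : ∀ q a q', 0 ≤ P q a q')
    (hPsum : ∀ q, ∀ a ∈ A q, ∑ q' : Q, P q a q' = 1)
    (ρ : Q → Act → Q → ℝ)
    (lam : ℝ) (hlam0 : 0 ≤ lam) (hlam1 : lam < 1)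
    (vstar : Q → ℝ) (hfix : bellman A hA P ρ lam vstar = vstar)
    (σ : Q → Act) (hσmem : ∀ q, σ q ∈ A q)
    (hgreedy : ∀ q,
      (∑ q' : Q, P q (σ q) q' * (ρ q (σ q) q' + lam * vstar q')) =
        bellman A hA P ρ lam vstar q)
    (vσ : Q → ℝ)
    (hvσ : ∀ q, vσ q = ∑ q' : Q, P q (σ q) q' * (ρ q (σ q) q' + lam * vσ q')) :
    vσ = vstar := by
  have key : ∀ q, vσ q - vstar q = lam * ∑ q' : Q, P q (σ q) q' * (vσ q' - vstar q') := by
    intro q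
    have h1 : vstar q = ∑ q' : Q, P q (σ q) q' * (ρ q (σ q) q' + lam * vstar q') := by
      rw [hgreedy q, hfix]
    rw [hvσ q, h1, Finset.mul_sum, ← Finset.sum_sub_distrib]
    apply Finset.sum_congr rfl
    intro q' _
    ring
  obtain ⟨q0, -, hq0⟩ := Finset.exists_max_image Finset.univ
    (fun q => |vσ q - vstar q|) ⟨Classical.arbitrary Q, Finset.mem_univ _⟩
  set M := |vσ q0 - vstar q0| with hM
  have hMnn : 0 ≤ M := abs_nonneg _
  have habs : |∑ q' : Q, P q0 (σ q0) q' * (vσ q' - vstar q')| ≤ M := by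
    calc |∑ q' : Q, P q0 (σ q0) q' * (vσ q' - vstar q')|
        ≤ ∑ q' : Q, |P q0 (σ q0) q' * (vσ q' - vstar q')| := Finset.abs_sum_le_sum_abs _ _
      _ ≤ ∑ q' : Q, P q0 (σ q0) q' * M := by
          apply Finset.sum_le_sum
          intro q' _
          rw [abs_mul, abs_of_nonneg (hPnonneg _ _ _)]
          exact mul_le_mul_of_nonneg_left (hq0 q' (Finset.mem_univ _)) (hPnonneg _ _ _)
      _ = M := by rw [← Finset.sum_mul, hPsum q0 (σ q0) (hσmem q0), one_mul]
  have hbound : M ≤ lam * M := by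
    calc M = lam * |∑ q' : Q, P q0 (σ q0) q' * (vσ q' - vstar q')| := by
          rw [hM, key q0, abs_mul, abs_of_nonneg hlam0]
      _ ≤ lam * M := mul_le_mul_of_nonneg_left habs hlam0
  have hM0 : M = 0 := by nlinarith
  funext q
  have : |vσ q - vstar q| ≤ 0 := hM0 ▸ hq0 q (Finset.mem_univ _)
  have := abs_nonneg (vσ q - vstar q)
  have : vσ q - vstar q = 0 := abs_eq_zero.mp (le_antisymm ‹|vσ q - vstar q| ≤ 0› this)
  linarith
end

section
/- If two end-components E₁ = (S₁, A₁) and E₂ = (S₂, A₂) of a finite MDP satisfy S₁ ∩ S₂ ≠ ∅, then (S₁ ∪ S₂, A₁ ∪ A₂) is also an end-component. -/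
variable {S Act : Type*}

/-- Edge relation of a sub-MDP (S', A'): s → s' if some enabled action of s in
the sub-MDP moves to s' with positive probability. -/
def SubEdge (T : S → Act → S → ℝ) (S' : Set S) (A' : S → Set Act) (s s' : S) : Prop :=
  s ∈ S' ∧ ∃ a ∈ A' s, 0 < T s a s'

/-- An end-component of an MDP with transition probabilities T: a nonempty
sub-MDP (S', A') with nonempty action sets, closed under probabilistic
transitions, whose transition graph is strongly connected. -/
def IsEC (T : S → Act → S → ℝ) (S' : Set S) (A' : S → Set Act) : Prop :=
  S'.Nonempty ∧
  (∀ s ∈ S', (A' s).Nonempty) ∧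
  (∀ s ∈ S', ∀ a ∈ A' s, ∀ s', 0 < T s a s' → s' ∈ S') ∧
  (∀ s ∈ S', ∀ s' ∈ S', Relation.ReflTransGen (SubEdge T S' A') s s')

theorem Relation.reflTransGen_of_mem_union {α : Type*} {r : α → α → Prop} {S₁ S₂ : Set α}
    (h₁ : ∀ x ∈ S₁, ∀ y ∈ S₁, Relation.ReflTransGen r x y)
    (h₂ : ∀ x ∈ S₂, ∀ y ∈ S₂, Relation.ReflTransGen r x y) (hmeet : (S₁ ∩ S₂).Nonempty) :
    ∀ x ∈ S₁ ∪ S₂, ∀ y ∈ S₁ ∪ S₂, Relation.ReflTransGen r x y := by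
  obtain ⟨m, hm₁, hm₂⟩ := hmeet
  rintro x (hx | hx) y (hy | hy)
  · exact h₁ x hx y hy
  · exact (h₁ x hx m hm₁).trans (h₂ m hm₂ y hy)
  · exact (h₂ x hx m hm₂).trans (h₁ m hm₁ y hy)
  · exact h₂ x hx y hy

theorem SubEdge.mono {T : S → Act → S → ℝ} {S' S'' : Set S} {A' A'' : S → Set Act}
    (hS : S' ⊆ S'') (hA : ∀ s, A' s ⊆ A'' s) {s s' : S} (h : SubEdge T S' A' s s') :
    SubEdge T S'' A'' s s' :=
  let ⟨hs, a, ha, hT⟩ := h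
  ⟨hS hs, a, hA s ha, hT⟩

theorem IsEC.reflTransGen_of_le {T : S → Act → S → ℝ} {S' S'' : Set S} {A' A'' : S → Set Act}
    (h : IsEC T S' A') (hS : S' ⊆ S'') (hA : ∀ s, A' s ⊆ A'' s) :
    ∀ x ∈ S', ∀ y ∈ S', Relation.ReflTransGen (SubEdge T S'' A'') x y :=
  fun x hx y hy => Relation.ReflTransGen.mono (fun _ _ => SubEdge.mono hS hA) _ _ (h.2.2.2 x hx y hy)

theorem IsEC.mem_of_pos_transition {T : S → Act → S → ℝ} {S' : Set S} {A' : S → Set Act}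
    (h : IsEC T S' A') (hout : ∀ s ∉ S', A' s = ∅) {s s' : S} {a : Act} (ha : a ∈ A' s)
    (hT : 0 < T s a s') : s' ∈ S' := by
  have hs : s ∈ S' := by
    by_contra hs
    simp [hout s hs] at ha
  exact h.2.2.1 s hs a ha s' hT

/-- if two end-components share a state, their (pointwise) union
is an end-component.  (Action maps are assumed empty outside their state sets.) -/
theorem union_of_overlapping_ECs_is_EC
    (T : S → Act → S → ℝ)
    (S₁ S₂ : Set S) (A₁ A₂ : S → Set Act)
    (hout₁ : ∀ s ∉ S₁, A₁ s = ∅) (hout₂ : ∀ s ∉ S₂, A₂ s = ∅)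
    (h₁ : IsEC T S₁ A₁) (h₂ : IsEC T S₂ A₂)
    (hmeet : (S₁ ∩ S₂).Nonempty) :
    IsEC T (S₁ ∪ S₂) (fun s => A₁ s ∪ A₂ s) := by
  refine ⟨h₁.1.mono Set.subset_union_left, ?_, ?_, ?_⟩
  · rintro s (hs | hs)
    exacts [(h₁.2.1 s hs).mono Set.subset_union_left, (h₂.2.1 s hs).mono Set.subset_union_right]
  · rintro s - a (ha | ha) s' hT
    exacts [Or.inl (h₁.mem_of_pos_transition hout₁ ha hT),
      Or.inr (h₂.mem_of_pos_transition hout₂ ha hT)]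
  · exact Relation.reflTransGen_of_mem_union
      (h₁.reflTransGen_of_le Set.subset_union_left fun _ => Set.subset_union_left)
      (h₂.reflTransGen_of_le Set.subset_union_right fun _ => Set.subset_union_right) hmeet
end
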